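/- Let K be a field of characteristic zero, X a finite connected poset, and φ ∈ Δ(I(X,K)). Then: (i) for all x ∈ X and u ≤ v in X with x ∉ {u,v}, φ(e_x)(u,u) = φ(e_x)(v,v); (ii) for all x < y and u < v belonging to a common chain of X, φ(e_{xy})(x,y) = φ(e_{uv})(u,v); (iii) for all x ∈ X and u < v, φ(e_x)(u,v) = 0 unless (x = u, u ∈ Min(X) and v ∈ Max(X)) or (x = v, u ∈ Min(X) and v ∈ Max(X)); (iv) for all x ∈ Min(X) and y ∈ Max(X) with x < y, φ(e_x)(x,y) = −φ(e_y)(x,y). -/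

import Mathlib

open scoped Classical

noncomputable section

/-- A `1/2`-derivation of a Lie algebra `L` over `K`:
`φ ⁅a, b⁆ = (1/2) • (⁅φ a, b⁆ + ⁅a, φ b⁆)`. -/
def IsHalfDerivation (K L : Type*) [Field K] [LieRing L] [LieAlgebra K L]
    (φ : L →ₗ[K] L) : Prop :=
  ∀ a b : L, φ ⁅a, b⁆ = (2⁻¹ : K) • (⁅φ a, b⁆ + ⁅a, φ b⁆)

/-- The standard basis element `e_{xy}` (for `x ≤ y`) of the incidence algebra. -/
def eI (K : Type*) {X : Type*} [Field K] [PartialOrder X] [DecidableEq X]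
    (x y : X) (h : x ≤ y) : IncidenceAlgebra K X :=
  ⟨fun u v => if x = u ∧ y = v then (1 : K) else 0, by
    intro u v huv
    show (if x = u ∧ y = v then (1 : K) else 0) = 0
    rw [if_neg]; rintro ⟨rfl, rfl⟩; exact huv h⟩

/-- A walk `u 0, u 1, …, u m` in a poset: consecutive vertices are comparable and
cover one another (`l(x,y) = 1`). -/
def IsWalkOn {X : Type*} [PartialOrder X] (u : ℕ → X) (m : ℕ) : Prop :=
  ∀ i < m, u i ⋖ u (i + 1) ∨ u (i + 1) ⋖ u i

/-- A poset is connected if any two of its elements are joined by a walk. -/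
def ConnectedPoset (X : Type*) [PartialOrder X] : Prop :=
  ∀ x y : X, ∃ (u : ℕ → X) (m : ℕ), IsWalkOn u m ∧ u 0 = x ∧ u m = y

attribute [local instance] LieRing.ofAssociativeRing

/-!
Every identity comes from evaluating `2 φ⁅a, b⁆ = ⁅φ a, b⁆ + ⁅a, φ b⁆` at a single entry, for
pairs of basis elements `a, b` whose bracket is `0` (`e_x` against `e_{uv}` with `x ∉ {u, v}`) or
is `e_{uv}` again (`⁅e_u, e_{uv}⁆ = ⁅e_{uv}, e_v⁆ = e_{uv}`). The first kind gives (i), (iv) and the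
vanishing of `φ(e_x)(u,v)` for `x ∉ {u, v}`; the second expresses `φ(e_{uv})(u,v)` as a difference
of diagonal entries of `φ(e_u)` or of `φ(e_v)`, from which (ii) follows by (i). For (iii) with
`x = u`, an element `w < u` gives `φ(e_u)(u,v) = 2 φ(e_{wu})(w,v) = -2 φ(e_w)(u,v) = 0`; the case
`v` not maximal is dual, and the remaining cases reduce to these through (iv).
-/

section BasisElements

variable {K X : Type*} [Field K] [PartialOrder X] [DecidableEq X]

lemma eI_apply (x y : X) (h : x ≤ y) (a b : X) :
    eI K x y h a b = if x = a ∧ y = b then 1 else 0 := rfl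

variable [LocallyFiniteOrder X]

lemma eI_mul_apply (x y : X) (h : x ≤ y) (g : IncidenceAlgebra K X) (a b : X) :
    (eI K x y h * g) a b = if x = a then g y b else 0 := by
  rw [IncidenceAlgebra.mul_apply]
  split_ifs with hxa
  · subst hxa
    by_cases hyb : y ≤ b
    · simp [eI_apply, h, hyb]
    · simp [eI_apply, IncidenceAlgebra.apply_eq_zero_of_not_le hyb]
  · simp [eI_apply, hxa]

lemma mul_eI_apply (x y : X) (h : x ≤ y) (g : IncidenceAlgebra K X) (a b : X) :
    (g * eI K x y h) a b = if y = b then g a x else 0 := by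
  rw [IncidenceAlgebra.mul_apply]
  split_ifs with hyb
  · subst hyb
    by_cases hax : a ≤ x
    · simp [eI_apply, h, hax]
    · simp [eI_apply, IncidenceAlgebra.apply_eq_zero_of_not_le hax]
  · simp [eI_apply, hyb]

lemma eI_lie_apply (x y : X) (h : x ≤ y) (g : IncidenceAlgebra K X) (a b : X) :
    ⁅eI K x y h, g⁆ a b = (if x = a then g y b else 0) - (if y = b then g a x else 0) := by
  rw [Ring.lie_def, IncidenceAlgebra.sub_apply, eI_mul_apply, mul_eI_apply]

lemma lie_eI_apply (x y : X) (h : x ≤ y) (g : IncidenceAlgebra K X) (a b : X) :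
    ⁅g, eI K x y h⁆ a b = (if y = b then g a x else 0) - (if x = a then g y b else 0) := by
  rw [Ring.lie_def, IncidenceAlgebra.sub_apply, eI_mul_apply, mul_eI_apply]

lemma lie_eI_self_eI_of_ne {x u v : X} (hxu : x ≠ u) (hxv : x ≠ v) (h : u ≤ v) :
    ⁅eI K x x le_rfl, eI K u v h⁆ = 0 := by
  ext a b
  simp [eI_lie_apply, eI_apply, Ne.symm hxu, Ne.symm hxv]

lemma lie_eI_self_eI {x y : X} (h : x < y) :
    ⁅eI K x x le_rfl, eI K x y h.le⁆ = eI K x y h.le := by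
  ext a b
  simp only [eI_lie_apply, eI_apply]
  rcases eq_or_ne x a with rfl | hxa <;> rcases eq_or_ne y b with rfl | hyb <;>
    simp [h.ne, h.ne', *]

lemma lie_eI_eI_self {x y : X} (h : x < y) :
    ⁅eI K x y h.le, eI K y y le_rfl⁆ = eI K x y h.le := by
  ext a b
  simp only [eI_lie_apply, eI_apply]
  rcases eq_or_ne x a with rfl | hxa <;> rcases eq_or_ne y b with rfl | hyb <;>
    simp [h.ne', *]

end BasisElements

namespace IsHalfDerivation

lemma two_smul_map_lie {K L : Type*} [Field K] [NeZero (2 : K)] [LieRing L] [LieAlgebra K L]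
    {φ : L →ₗ[K] L} (hφ : IsHalfDerivation K L φ) (a b : L) :
    (2 : K) • φ ⁅a, b⁆ = ⁅φ a, b⁆ + ⁅a, φ b⁆ := by
  rw [hφ a b, smul_smul, mul_inv_cancel₀ two_ne_zero, one_smul]

variable {K X : Type*} [Field K] [NeZero (2 : K)] [PartialOrder X] [LocallyFiniteOrder X]
  [DecidableEq X] {φ : IncidenceAlgebra K X →ₗ[K] IncidenceAlgebra K X}
  (hφ : IsHalfDerivation K (IncidenceAlgebra K X) φ)
include hφ

lemma two_mul_map_lie_apply (f g : IncidenceAlgebra K X) (a b : X) :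
    2 * φ ⁅f, g⁆ a b = ⁅φ f, g⁆ a b + ⁅f, φ g⁆ a b := by
  simpa only [IncidenceAlgebra.constSMul_apply, IncidenceAlgebra.add_apply, smul_eq_mul] using
    congrFun (DFunLike.congr_fun (hφ.two_smul_map_lie f g) a) b

lemma map_eI_self_apply_self_eq {x u v : X} (hxu : x ≠ u) (hxv : x ≠ v) (huv : u ≤ v) :
    φ (eI K x x le_rfl) u u = φ (eI K x x le_rfl) v v := by
  have h := hφ.two_mul_map_lie_apply (eI K x x le_rfl) (eI K u v huv) u v
  simp only [lie_eI_self_eI_of_ne hxu hxv, map_zero, IncidenceAlgebra.zero_apply, eI_lie_apply,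
    lie_eI_apply, if_neg hxu, if_neg hxv, if_true] at h
  linear_combination -h

lemma map_eI_self_apply_self_eq_of_comparable {x u v : X} (hxu : x ≠ u) (hxv : x ≠ v)
    (huv : u ≤ v ∨ v ≤ u) :
    φ (eI K x x le_rfl) u u = φ (eI K x x le_rfl) v v := by
  rcases huv with h | h
  · exact hφ.map_eI_self_apply_self_eq hxu hxv h
  · exact (hφ.map_eI_self_apply_self_eq hxv hxu h).symm

lemma map_eI_apply_eq_sub_left {u v : X} (h : u < v) :
    φ (eI K u v h.le) u v = φ (eI K u u le_rfl) u u - φ (eI K u u le_rfl) v v := by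
  have H := hφ.two_mul_map_lie_apply (eI K u u le_rfl) (eI K u v h.le) u v
  simp only [lie_eI_self_eI h, eI_lie_apply, lie_eI_apply, if_true, if_neg h.ne] at H
  linear_combination H

lemma map_eI_apply_eq_sub_right {u v : X} (h : u < v) :
    φ (eI K u v h.le) u v = φ (eI K v v le_rfl) v v - φ (eI K v v le_rfl) u u := by
  have H := hφ.two_mul_map_lie_apply (eI K u v h.le) (eI K v v le_rfl) u v
  simp only [lie_eI_eI_self h, eI_lie_apply, lie_eI_apply, if_true, if_neg h.ne'] at H
  linear_combination H

lemma map_eI_self_apply_eq_neg {u v : X} (h : u < v) :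
    φ (eI K u u le_rfl) u v = -φ (eI K v v le_rfl) u v := by
  have H := hφ.two_mul_map_lie_apply (eI K u u le_rfl) (eI K v v le_rfl) u v
  simp only [lie_eI_self_eI_of_ne h.ne h.ne le_rfl, map_zero, IncidenceAlgebra.zero_apply,
    eI_lie_apply, lie_eI_apply, if_true, if_neg h.ne, if_neg h.ne'] at H
  linear_combination -H

lemma map_eI_self_apply_eq_zero_of_ne {x u v : X} (hxu : x ≠ u) (hxv : x ≠ v) (h : u < v) :
    φ (eI K x x le_rfl) u v = 0 := by
  have H := hφ.two_mul_map_lie_apply (eI K x x le_rfl) (eI K v v le_rfl) u v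
  simp only [lie_eI_self_eI_of_ne hxv hxv le_rfl, map_zero, IncidenceAlgebra.zero_apply,
    eI_lie_apply, lie_eI_apply, if_true, if_neg hxu, if_neg hxv, if_neg h.ne'] at H
  linear_combination -H

lemma map_eI_self_apply_left_eq_zero {u v : X} (hu : ¬IsMin u) (huv : u < v) :
    φ (eI K u u le_rfl) u v = 0 := by
  obtain ⟨w, hwu⟩ := not_isMin_iff.1 hu
  have hwv : w < v := hwu.trans huv
  have hw : φ (eI K w u hwu.le) w v = 0 := by
    have H := hφ.two_mul_map_lie_apply (eI K w w le_rfl) (eI K w u hwu.le) w v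
    simp only [lie_eI_self_eI hwu, eI_lie_apply, lie_eI_apply, if_true, if_neg huv.ne,
      if_neg hwv.ne, hφ.map_eI_self_apply_eq_zero_of_ne hwu.ne hwv.ne huv] at H
    linear_combination H
  have H := hφ.two_mul_map_lie_apply (eI K w u hwu.le) (eI K u u le_rfl) w v
  simp only [lie_eI_eI_self hwu, eI_lie_apply, lie_eI_apply, if_true, if_neg huv.ne,
    if_neg hwu.ne', hw] at H
  linear_combination -H

lemma map_eI_self_apply_right_eq_zero {u v : X} (hv : ¬IsMax v) (huv : u < v) :
    φ (eI K v v le_rfl) u v = 0 := by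
  obtain ⟨t, hvt⟩ := not_isMax_iff.1 hv
  have hut : u < t := huv.trans hvt
  have ht : φ (eI K v t hvt.le) u t = 0 := by
    have H := hφ.two_mul_map_lie_apply (eI K v t hvt.le) (eI K t t le_rfl) u t
    simp only [lie_eI_eI_self hvt, eI_lie_apply, lie_eI_apply, if_true, if_neg huv.ne',
      if_neg hut.ne', hφ.map_eI_self_apply_eq_zero_of_ne hut.ne' hvt.ne' huv] at H
    linear_combination H
  have H := hφ.two_mul_map_lie_apply (eI K v v le_rfl) (eI K v t hvt.le) u t
  simp only [lie_eI_self_eI hvt, eI_lie_apply, lie_eI_apply, if_true, if_neg huv.ne',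
    if_neg hvt.ne, ht] at H
  linear_combination -H

lemma map_eI_apply_eq_of_left_eq {x y v : X} (hxy : x < y) (hxv : x < v)
    (hyv : y ≤ v ∨ v ≤ y) :
    φ (eI K x y hxy.le) x y = φ (eI K x v hxv.le) x v := by
  rw [hφ.map_eI_apply_eq_sub_left hxy, hφ.map_eI_apply_eq_sub_left hxv,
    hφ.map_eI_self_apply_self_eq_of_comparable hxy.ne hxv.ne hyv]

lemma map_eI_apply_eq_of_right_eq_left {x y v : X} (hxy : x < y) (hyv : y < v) :
    φ (eI K x y hxy.le) x y = φ (eI K y v hyv.le) y v := by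
  rw [hφ.map_eI_apply_eq_sub_right hxy, hφ.map_eI_apply_eq_sub_left hyv,
    hφ.map_eI_self_apply_self_eq hxy.ne' hyv.ne (hxy.trans hyv).le]

lemma map_eI_apply_eq_of_lt_left {x y u v : X} (hxy : x < y) (huv : u < v) (hxu : x < u)
    (hyu : y ≤ u ∨ u ≤ y) :
    φ (eI K x y hxy.le) x y = φ (eI K u v huv.le) u v :=
  (hφ.map_eI_apply_eq_of_left_eq hxy hxu hyu).trans
    (hφ.map_eI_apply_eq_of_right_eq_left hxu huv)

lemma map_eI_apply_eq_of_comparable {x y u v : X} (hxy : x < y) (huv : u < v)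
    (hxu : x ≤ u ∨ u ≤ x) (hxv : x ≤ v ∨ v ≤ x) (hyu : y ≤ u ∨ u ≤ y) (hyv : y ≤ v ∨ v ≤ y) :
    φ (eI K x y hxy.le) x y = φ (eI K u v huv.le) u v := by
  rcases eq_or_ne x u with rfl | hne
  · exact hφ.map_eI_apply_eq_of_left_eq hxy huv hyv
  rcases hxu with hle | hle
  · exact hφ.map_eI_apply_eq_of_lt_left hxy huv (hle.lt_of_ne hne) hyu
  · exact (hφ.map_eI_apply_eq_of_lt_left huv hxy (hle.lt_of_ne hne.symm) hxv.symm).symm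

lemma map_eI_self_apply_eq_zero {x u v : X} (huv : u < v)
    (hx : ¬((x = u ∧ IsMin u ∧ IsMax v) ∨ (x = v ∧ IsMin u ∧ IsMax v))) :
    φ (eI K x x le_rfl) u v = 0 := by
  rcases eq_or_ne x u with rfl | hxu
  · by_cases hmin : IsMin x
    · have hmax : ¬IsMax v := fun hmax => hx (Or.inl ⟨rfl, hmin, hmax⟩)
      rw [hφ.map_eI_self_apply_eq_neg huv, hφ.map_eI_self_apply_right_eq_zero hmax huv, neg_zero]
    · exact hφ.map_eI_self_apply_left_eq_zero hmin huv
  rcases eq_or_ne x v with rfl | hxv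
  · by_cases hmax : IsMax x
    · have hmin : ¬IsMin u := fun hmin => hx (Or.inr ⟨rfl, hmin, hmax⟩)
      rw [← neg_eq_zero, ← hφ.map_eI_self_apply_eq_neg huv,
        hφ.map_eI_self_apply_left_eq_zero hmin huv]
    · exact hφ.map_eI_self_apply_right_eq_zero hmax huv
  exact hφ.map_eI_self_apply_eq_zero_of_ne hxu hxv huv

end IsHalfDerivation

theorem statement8_general (K X : Type*) [Field K] [CharZero K] [PartialOrder X]
    [LocallyFiniteOrder X] [DecidableEq X]
    (φ : IncidenceAlgebra K X →ₗ[K] IncidenceAlgebra K X)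
    (hφ : IsHalfDerivation K (IncidenceAlgebra K X) φ) :
    (∀ x u v : X, u ≤ v → x ≠ u → x ≠ v →
        φ (eI K x x le_rfl) u u = φ (eI K x x le_rfl) v v) ∧
    (∀ (x y u v : X) (h1 : x < y) (h2 : u < v),
        (x ≤ u ∨ u ≤ x) → (x ≤ v ∨ v ≤ x) → (y ≤ u ∨ u ≤ y) → (y ≤ v ∨ v ≤ y) →
        φ (eI K x y h1.le) x y = φ (eI K u v h2.le) u v) ∧
    (∀ x u v : X, u < v →
        ¬((x = u ∧ IsMin u ∧ IsMax v) ∨ (x = v ∧ IsMin u ∧ IsMax v)) →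
        φ (eI K x x le_rfl) u v = 0) ∧
    (∀ x y : X, IsMin x → IsMax y → x < y →
        φ (eI K x x le_rfl) x y = -φ (eI K y y le_rfl) x y) :=
  ⟨fun _ _ _ huv hxu hxv => hφ.map_eI_self_apply_self_eq hxu hxv huv,
    fun _ _ _ _ h1 h2 => hφ.map_eI_apply_eq_of_comparable h1 h2,
    fun _ _ _ huv hx => hφ.map_eI_self_apply_eq_zero huv hx,
    fun _ _ _ _ hxy => hφ.map_eI_self_apply_eq_neg hxy⟩

/-- the four coefficient identities for a `1/2`-derivation `φ` of
`I(X,K)` over a finite connected poset. -/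
theorem statement8 (K X : Type*) [Field K] [CharZero K] [PartialOrder X] [Fintype X]
    [LocallyFiniteOrder X] [DecidableEq X] (hconn : ConnectedPoset X)
    (φ : IncidenceAlgebra K X →ₗ[K] IncidenceAlgebra K X)
    (hφ : IsHalfDerivation K (IncidenceAlgebra K X) φ) :
    (∀ x u v : X, u ≤ v → x ≠ u → x ≠ v →
        φ (eI K x x le_rfl) u u = φ (eI K x x le_rfl) v v) ∧
    (∀ (x y u v : X) (h1 : x < y) (h2 : u < v),
        (x ≤ u ∨ u ≤ x) → (x ≤ v ∨ v ≤ x) → (y ≤ u ∨ u ≤ y) → (y ≤ v ∨ v ≤ y) →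
        φ (eI K x y h1.le) x y = φ (eI K u v h2.le) u v) ∧
    (∀ x u v : X, u < v →
        ¬((x = u ∧ IsMin u ∧ IsMax v) ∨ (x = v ∧ IsMin u ∧ IsMax v)) →
        φ (eI K x x le_rfl) u v = 0) ∧
    (∀ x y : X, IsMin x → IsMax y → x < y →
        φ (eI K x x le_rfl) x y = -φ (eI K y y le_rfl) x y) :=
  statement8_general K X φ hφ
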